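/- arXiv:2209.14977 — 2 statements merged into one kernel-verified Lean document; each statement's English description precedes it below -/
import Mathlib

section
/- Let Ω be a set, D ⊆ Ω a subset, and Θ : Ω → ℝ a function. Let ρ > 0 and ε > 0 be real numbers such that 0 ≤ Θ(x) < ρ for every x ∈ D and Θ(x) > 4ρ/(π²ε²) for every x ∈ Ω \ D. Define I(x) := 1 − (2/π) · arctan((π ε / (2ρ)) · Θ(x)). Then for every x ∈ Ω, |𝟙_D(x) − I(x)| < ε, where 𝟙_D denotes the characteristic (index) function of D, i.e. 𝟙_D(x) = 1 if x ∈ D and 𝟙_D(x) = 0 otherwise. -/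
open Real

lemma arctan_le_self_aux {t : ℝ} (ht : 0 ≤ t) : Real.arctan t ≤ t := by
  have h1 : 0 ≤ Real.arctan t := by
    rw [← Real.arctan_zero]; exact Real.arctan_strictMono.monotone ht
  have h2 := Real.le_tan h1 (Real.arctan_lt_pi_div_two t)
  rwa [Real.tan_arctan] at h2

/-- Core approximation step in Theorem 1: if `0 ≤ Θ x < ρ` on `D` and
`Θ x > 4ρ/(π²ε²)` off `D`, then `I(x) := 1 − (2/π) arctan((π ε / (2ρ)) Θ(x))`
approximates the index function of `D` within `ε` at every point. -/
theorem index_function_pointwise_approx {Ω : Type*} (D : Set Ω) (Θ : Ω → ℝ)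
    (ρ ε : ℝ) (hρ : 0 < ρ) (hε : 0 < ε)
    (hin : ∀ x ∈ D, 0 ≤ Θ x ∧ Θ x < ρ)
    (hout : ∀ x ∉ D, Θ x > 4 * ρ / (Real.pi ^ 2 * ε ^ 2)) :
    ∀ x : Ω,
      |D.indicator (fun _ => (1 : ℝ)) x -
        (1 - (2 / Real.pi) * Real.arctan ((Real.pi * ε / (2 * ρ)) * Θ x))| < ε := by
  intro x
  have hπ : 0 < Real.pi := Real.pi_pos
  set c : ℝ := Real.pi * ε / (2 * ρ) with hc
  have hc0 : 0 < c := by positivity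
  by_cases hx : x ∈ D
  · obtain ⟨hΘ0, hΘρ⟩ := hin x hx
    rw [Set.indicator_of_mem hx]
    have ht0 : 0 ≤ c * Θ x := by positivity
    have h1 : Real.arctan (c * Θ x) ≤ c * Θ x := arctan_le_self_aux ht0
    have h2 : c * Θ x < Real.pi * ε / 2 := by
      rw [hc]
      calc Real.pi * ε / (2 * ρ) * Θ x < Real.pi * ε / (2 * ρ) * ρ := by
            rcases eq_or_lt_of_le hΘ0 with h | h
            · rw [← h]; simp; positivity
            · exact mul_lt_mul_of_pos_left hΘρ (by positivity)
        _ = Real.pi * ε / 2 := by field_simp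
    have h3 : 0 ≤ Real.arctan (c * Θ x) := by
      rw [← Real.arctan_zero]; exact Real.arctan_strictMono.monotone ht0
    have : (2 / Real.pi) * Real.arctan (c * Θ x) < ε := by
      calc (2 / Real.pi) * Real.arctan (c * Θ x) ≤ (2 / Real.pi) * (c * Θ x) := by
            exact mul_le_mul_of_nonneg_left h1 (by positivity)
        _ < (2 / Real.pi) * (Real.pi * ε / 2) := by
            exact mul_lt_mul_of_pos_left h2 (by positivity)
        _ = ε := by field_simp
    rw [abs_lt]
    constructor <;> [nlinarith [hε, h3, mul_nonneg (le_of_lt (show (0:ℝ) < 2/Real.pi by positivity)) h3]; nlinarith]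
  · have hΘ : Θ x > 4 * ρ / (Real.pi ^ 2 * ε ^ 2) := hout x hx
    rw [Set.indicator_of_notMem hx]
    have hΘ0 : 0 < Θ x := lt_trans (by positivity) hΘ
    set t : ℝ := c * Θ x with htd
    have ht0 : 0 < t := by positivity
    have hkey : 2 / (Real.pi * ε) < t := by
      rw [htd, hc]
      have h4 : 4 * ρ / (Real.pi ^ 2 * ε ^ 2) * (Real.pi * ε / (2 * ρ)) = 2 / (Real.pi * ε) := by
        field_simp; ring
      calc 2 / (Real.pi * ε) = Real.pi * ε / (2 * ρ) * (4 * ρ / (Real.pi ^ 2 * ε ^ 2)) := by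
            field_simp; ring
        _ < Real.pi * ε / (2 * ρ) * Θ x := mul_lt_mul_of_pos_left hΘ (by positivity)
    -- arctan t > π/2 - 1/t
    have hinv : Real.arctan t⁻¹ = Real.pi / 2 - Real.arctan t := Real.arctan_inv_of_pos ht0
    have h1 : Real.arctan t⁻¹ ≤ t⁻¹ := arctan_le_self_aux (by positivity)
    have h2 : Real.pi / 2 - t⁻¹ ≤ Real.arctan t := by linarith [hinv ▸ h1]
    have h3 : t⁻¹ < Real.pi * ε / 2 := by
      rw [inv_lt_comm₀ ht0 (by positivity)]
      calc (Real.pi * ε / 2)⁻¹ = 2 / (Real.pi * ε) := by field_simp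
        _ < t := hkey
    have harctan_lt : Real.arctan t < Real.pi / 2 := Real.arctan_lt_pi_div_two t
    have hfinal : 1 - (2 / Real.pi) * Real.arctan t < ε := by
      have : (2 / Real.pi) * (Real.pi / 2 - t⁻¹) ≤ (2 / Real.pi) * Real.arctan t :=
        mul_le_mul_of_nonneg_left h2 (by positivity)
      have hexp : (2 / Real.pi) * (Real.pi / 2 - t⁻¹) = 1 - 2 / Real.pi * t⁻¹ := by
        field_simp
      have hb : 2 / Real.pi * t⁻¹ < ε := by
        calc 2 / Real.pi * t⁻¹ < 2 / Real.pi * (Real.pi * ε / 2) :=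
              mul_lt_mul_of_pos_left h3 (by positivity)
          _ = ε := by field_simp
      linarith [hexp ▸ this]
    have hpos : 0 < 1 - (2 / Real.pi) * Real.arctan t + ε := by
      have : (2 / Real.pi) * Real.arctan t < (2 / Real.pi) * (Real.pi / 2) :=
        mul_lt_mul_of_pos_left harctan_lt (by positivity)
      have : (2 / Real.pi) * (Real.pi / 2) = 1 := by field_simp
      nlinarith [mul_lt_mul_of_pos_left harctan_lt (show (0:ℝ) < 2 / Real.pi by positivity)]
    rw [abs_lt]
    constructor <;> nlinarith
end

section
/- Let a and N be positive integers and let z₀ ∈ [0, π]. Let κ_N(x,z) denote the Taylor polynomial of degree N−1, in the variable z and centered at z₀, of the function z ↦ sin((a+1)(x−z)), and define ũ(z) := ∫₀^π κ_N(x,z) · sin(ax) dx. Then for every z ∈ [0, π], |(2a/(2a+1)) · sin((a+1)z) − ũ(z)| ≤ π^{N+1} (a+1)^N / N!. -/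
/-!
The exact output is itself an integral of the full kernel:
`∫₀^π sin((a+1)(x-z)) sin(ax) dx = (2a/(2a+1)) sin((a+1)z)`, by the product-to-sum formula
and the oddness of `2a+1`. So the error is the integral against `sin(ax)` of the Taylor remainder
of `w ↦ sin((a+1)(x-w))`, whose `N`-th derivative is bounded by `(a+1)^N`; the Lagrange remainder
gives `(a+1)^N |z-z₀|^N / N! ≤ π^N (a+1)^N / N!` pointwise, and integrating over `[0, π]`
contributes one more factor `π`.
-/

open Real Finset intervalIntegral Nat

theorem abs_sub_sum_taylor_le {f : ℝ → ℝ} {N : ℕ} (hf : ContDiff ℝ N f) {C : ℝ}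
    (hC : ∀ y, |iteratedDeriv N f y| ≤ C) (x₀ x : ℝ) :
    |f x - ∑ l ∈ range N, (x - x₀) ^ l / (l ! : ℝ) * iteratedDeriv l f x₀|
      ≤ C * |x - x₀| ^ N / (N ! : ℝ) := by
  rcases N with _ | n
  · simpa using hC x
  rcases eq_or_ne x₀ x with rfl | hx
  · simp [sum_range_succ']
  obtain ⟨y, -, hrem⟩ := taylor_mean_remainder_lagrange_iteratedDeriv hx hf.contDiffOn
  have htaylor : taylorWithinEval f n (Set.uIcc x₀ x) x₀ x =
      ∑ l ∈ range (n + 1), (x - x₀) ^ l / (l ! : ℝ) * iteratedDeriv l f x₀ := by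
    rw [taylor_within_apply]
    refine sum_congr rfl fun l hl => ?_
    rw [iteratedDerivWithin_eq_iteratedDeriv (uniqueDiffOn_uIcc hx)
      ((hf.of_le (by exact_mod_cast (mem_range.1 hl).le)).contDiffAt) Set.left_mem_uIcc,
      smul_eq_mul]
    ring
  rw [← htaylor, hrem, abs_div, abs_mul, abs_pow, Nat.abs_cast]
  gcongr
  exact hC y

theorem iteratedDeriv_sin_mul_sub (c x : ℝ) (l : ℕ) :
    iteratedDeriv l (fun w => sin (c * (x - w))) =
      fun w => (-c) ^ l * iteratedDeriv l sin (c * (x - w)) := by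
  rw [iteratedDeriv_comp_const_sub l (fun u => sin (c * u)),
    iteratedDeriv_comp_const_mul contDiff_sin]
  funext w
  rw [smul_eq_mul, neg_pow c, mul_assoc]

theorem abs_iteratedDeriv_sin_mul_sub_le (c x w : ℝ) (l : ℕ) :
    |iteratedDeriv l (fun w => sin (c * (x - w))) w| ≤ |c| ^ l := by
  rw [iteratedDeriv_sin_mul_sub, abs_mul, abs_pow, abs_neg]
  exact mul_le_of_le_one_right (by positivity) (abs_iteratedDeriv_sin_le_one l _)

theorem continuous_iteratedDeriv_sin_mul_sub (c w : ℝ) (l : ℕ) :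
    Continuous fun x => iteratedDeriv l (fun w => sin (c * (x - w))) w := by
  simp only [iteratedDeriv_sin_mul_sub]
  have := (differentiable_iteratedDeriv_sin l).continuous
  fun_prop

theorem abs_sin_mul_sub_sub_sum_taylor_le (c x z₀ z : ℝ) (N : ℕ) :
    |sin (c * (x - z)) - ∑ l ∈ range N,
        (z - z₀) ^ l / (l ! : ℝ) * iteratedDeriv l (fun w => sin (c * (x - w))) z₀|
      ≤ |c| ^ N * |z - z₀| ^ N / (N ! : ℝ) :=
  abs_sub_sum_taylor_le (f := fun w => sin (c * (x - w))) (by fun_prop)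
    (abs_iteratedDeriv_sin_mul_sub_le c x · N) z₀ z

theorem integral_sin_mul_sub_mul_sin (a : ℕ) (z : ℝ) :
    ∫ x in (0:ℝ)..π, sin ((a + 1) * (x - z)) * sin (a * x) =
      2 * a / (2 * a + 1) * sin ((a + 1) * z) := by
  have hm : (2 * a + 1 : ℝ) ≠ 0 := by positivity
  have hprod (x : ℝ) : sin ((a + 1) * (x - z)) * sin (a * x) =
      (cos (x - (a + 1) * z) - cos ((2 * a + 1) * x - (a + 1) * z)) / 2 := by
    rw [cos_sub_cos, show (x - (a + 1) * z + ((2 * a + 1) * x - (a + 1) * z)) / 2 = (a + 1) * (x - z)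
      by ring, show (x - (a + 1) * z - ((2 * a + 1) * x - (a + 1) * z)) / 2 = -(a * x) by ring,
      sin_neg]
    ring
  have hodd : sin ((2 * a + 1) * π - (a + 1) * z) = sin ((a + 1) * z) := by
    have := sin_nat_mul_pi_sub ((a + 1) * z) (2 * a + 1)
    rw [(odd_two_mul_add_one a).neg_one_pow] at this
    push_cast at this
    simpa using this
  simp_rw [hprod]
  rw [integral_div, integral_sub (by apply Continuous.intervalIntegrable; fun_prop)
    (by apply Continuous.intervalIntegrable; fun_prop), integral_comp_sub_right cos,
    integral_comp_mul_sub cos hm, integral_cos, integral_cos, hodd]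
  simp only [zero_sub, mul_zero, sin_neg, sin_pi_sub, smul_eq_mul]
  field_simp
  ring

theorem frequency_bootstrapping_general (a N : ℕ)
    (z₀ : ℝ) (hz₀ : z₀ ∈ Set.Icc 0 Real.pi) :
    ∀ z ∈ Set.Icc (0:ℝ) Real.pi,
      |(2 * (a : ℝ) / (2 * (a : ℝ) + 1)) * Real.sin (((a : ℝ) + 1) * z) -
          ∫ x in (0:ℝ)..Real.pi,
            (∑ l ∈ Finset.range N,
              (z - z₀) ^ l / (Nat.factorial l : ℝ) *
                iteratedDeriv l (fun w => Real.sin (((a : ℝ) + 1) * (x - w))) z₀) *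
              Real.sin ((a : ℝ) * x)|
        ≤ Real.pi ^ (N + 1) * ((a : ℝ) + 1) ^ N / (Nat.factorial N : ℝ) := by
  intro z hz
  have hdist : |z - z₀| ≤ π :=
    abs_sub_le_iff.2 ⟨by linarith [hz.2, hz₀.1], by linarith [hz.1, hz₀.2]⟩
  have hcont_exact : Continuous fun x => sin (((a : ℝ) + 1) * (x - z)) * sin (a * x) := by
    fun_prop
  have hcont_taylor : Continuous fun x =>
      (∑ l ∈ range N, (z - z₀) ^ l / (l ! : ℝ) *
        iteratedDeriv l (fun w => sin (((a : ℝ) + 1) * (x - w))) z₀) * sin (a * x) := by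
    have := (continuous_iteratedDeriv_sin_mul_sub ((a : ℝ) + 1) z₀ ·)
    fun_prop
  rw [← integral_sin_mul_sub_mul_sin, ← integral_sub (hcont_exact.intervalIntegrable _ _)
    (hcont_taylor.intervalIntegrable _ _), ← norm_eq_abs]
  calc _ ≤ π ^ N * ((a : ℝ) + 1) ^ N / (N ! : ℝ) * |π - 0| := by
        refine norm_integral_le_of_norm_le_const fun x _ => ?_
        have hremainder := abs_sin_mul_sub_sub_sum_taylor_le ((a : ℝ) + 1) x z₀ z N
        rw [abs_of_pos (by positivity : (0 : ℝ) < a + 1)] at hremainder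
        rw [norm_eq_abs, ← sub_mul, abs_mul]
        calc _ ≤ ((a : ℝ) + 1) ^ N * |z - z₀| ^ N / (N ! : ℝ) * 1 :=
              mul_le_mul hremainder (abs_sin_le_one _) (abs_nonneg _) (by positivity)
          _ ≤ _ := by rw [mul_one, mul_comm (((a : ℝ) + 1) ^ N)]; gcongr
    _ = _ := by rw [sub_zero, abs_of_pos pi_pos]; ring

/-- Frequency bootstrapping (Theorem 2, concrete content): the rank-`N`
degenerate (Pincherle–Goursat) kernel `κ_N(x,z)`, the degree-`(N−1)` Taylor
polynomial in `z` centered at `z₀ ∈ [0,π]` of `sin((a+1)(x−z))`, applied to the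
frequency-`a` input `sin(ax)` produces `ũ(z)` approximating the
higher-frequency output `(2a/(2a+1)) sin((a+1)z)` uniformly on `[0,π]` with
error at most `π^{N+1}(a+1)^N / N!`. -/
theorem frequency_bootstrapping (a N : ℕ) (ha : 1 ≤ a) (hN : 1 ≤ N)
    (z₀ : ℝ) (hz₀ : z₀ ∈ Set.Icc 0 Real.pi) :
    ∀ z ∈ Set.Icc (0:ℝ) Real.pi,
      |(2 * (a : ℝ) / (2 * (a : ℝ) + 1)) * Real.sin (((a : ℝ) + 1) * z) -
          ∫ x in (0:ℝ)..Real.pi,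
            (∑ l ∈ Finset.range N,
              (z - z₀) ^ l / (Nat.factorial l : ℝ) *
                iteratedDeriv l (fun w => Real.sin (((a : ℝ) + 1) * (x - w))) z₀) *
              Real.sin ((a : ℝ) * x)|
        ≤ Real.pi ^ (N + 1) * ((a : ℝ) + 1) ^ N / (Nat.factorial N : ℝ) :=
  frequency_bootstrapping_general a N z₀ hz₀
end
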